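/- For d ≥ 2 and H_a(X) = a^d e^{(1-a²)X} + e^{(1-a^{-2})X} - (1+a^d) with unique positive zero X_a: lim_{a→1⁺} X_a = d/2 + 1. -/

import Mathlib

/-!
For fixed `y ≠ 0`, expanding both exponentials to second order gives
`H_a(y) / (a² - 1)² → y² - (d/2 + 1) y` as `a → 1⁺`, so for `0 < t < d/2 + 1 < T` eventually
`H_a(t) < 0 < H_a(T)`. As `H_a` is convex and vanishes at `0` and at `X_a`, it is `≤ 0` on
`[0, X_a]` and `≥ 0` beyond `X_a`; hence `t < X_a < T`.
-/

open Real Filter Topology Set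

noncomputable def H (d : ℕ) (a y : ℝ) : ℝ :=
  a ^ d * exp ((1 - a ^ 2) * y) + exp ((1 - (a ^ 2)⁻¹) * y) - (1 + a ^ d)

noncomputable def expQuadRatio (u : ℝ) : ℝ := (exp u - 1 - u) / u ^ 2

theorem tendsto_expQuadRatio : Tendsto expQuadRatio (𝓝[≠] 0) (𝓝 (1 / 2)) := by
  rw [← tendsto_sub_nhds_zero_iff]
  refine squeeze_zero_norm' (a := fun u => 2 / 9 * |u|) ?_ ?_
  · filter_upwards [eventually_nhdsWithin_of_eventually_nhds (eventually_abs_sub_lt 0 one_pos),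
      self_mem_nhdsWithin] with u hu (hu0 : u ≠ 0)
    rw [sub_zero] at hu
    have hbound := Real.exp_bound hu.le (n := 3) (by norm_num)
    norm_num [Finset.sum_range_succ, Nat.factorial] at hbound
    have hu2 : 0 < u ^ 2 := by positivity
    rw [Real.norm_eq_abs, expQuadRatio, show (exp u - 1 - u) / u ^ 2 - 1 / 2
      = (exp u - (1 + u + u ^ 2 / 2)) / u ^ 2 by field_simp; ring, abs_div, abs_of_pos hu2,
      div_le_iff₀ hu2]
    calc _ ≤ |u| ^ 3 * (2 / 9) := by convert hbound using 3
      _ = 2 / 9 * |u| * u ^ 2 := by rw [pow_succ, pow_two |u|, abs_mul_abs_self]; ring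
  · simpa using ((continuous_abs.tendsto (0 : ℝ)).const_mul (2 / 9)).mono_left nhdsWithin_le_nhds

theorem tendsto_nhdsNE_zero_of_continuousAt {φ : ℝ → ℝ} (hφ : ContinuousAt φ 1) (h1 : φ 1 = 0)
    (hne : ∀ a, 1 < a → φ a ≠ 0) : Tendsto φ (𝓝[>] 1) (𝓝[≠] 0) :=
  tendsto_nhdsWithin_of_tendsto_nhds_of_eventually_within _
    (h1 ▸ hφ.tendsto.mono_left nhdsWithin_le_nhds) (eventually_nhdsWithin_of_forall hne)

-- The first-order terms of the two exponentials add up to `-(a² - 1) y (a^(d+2) - 1) / a²`.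
theorem H_div_sq_eq (d : ℕ) {a y : ℝ} (ha : 1 < a) (hy : y ≠ 0) :
    H d a y / (a ^ 2 - 1) ^ 2 =
      a ^ d * expQuadRatio ((1 - a ^ 2) * y) * y ^ 2
        + expQuadRatio ((1 - (a ^ 2)⁻¹) * y) * (y / a ^ 2) ^ 2
        - y * (∑ i ∈ Finset.range (d + 2), a ^ i) / ((a + 1) * a ^ 2) := by
  have ha0 : a ≠ 0 := by positivity
  have ha1 : a - 1 ≠ 0 := sub_ne_zero.2 ha.ne'
  have hs : a ^ 2 - 1 ≠ 0 := by nlinarith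
  have hs' : 1 - a ^ 2 ≠ 0 := by nlinarith
  have ha2 : a + 1 ≠ 0 := by positivity
  rw [geom_sum_eq ha.ne']
  simp only [H, expQuadRatio]
  field_simp
  ring

theorem tendsto_H_div_sq (d : ℕ) {y : ℝ} (hy : y ≠ 0) :
    Tendsto (fun a => H d a y / (a ^ 2 - 1) ^ 2) (𝓝[>] 1) (𝓝 (y ^ 2 - ((d : ℝ) / 2 + 1) * y)) := by
  have hsq : ∀ a : ℝ, 1 < a → 1 < a ^ 2 := fun a ha => one_lt_pow₀ ha two_ne_zero
  have hQ₁ : Tendsto (fun a => expQuadRatio ((1 - a ^ 2) * y)) (𝓝[>] 1) (𝓝 (1 / 2)) :=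
    tendsto_expQuadRatio.comp <| tendsto_nhdsNE_zero_of_continuousAt (by fun_prop) (by simp)
      fun a ha => mul_ne_zero (sub_ne_zero.2 (hsq a ha).ne) hy
  have hQ₂ : Tendsto (fun a => expQuadRatio ((1 - (a ^ 2)⁻¹) * y)) (𝓝[>] 1) (𝓝 (1 / 2)) :=
    tendsto_expQuadRatio.comp <| tendsto_nhdsNE_zero_of_continuousAt
      (by fun_prop (disch := norm_num)) (by simp)
      fun a ha => mul_ne_zero (sub_ne_zero.2 (inv_lt_one_of_one_lt₀ (hsq a ha)).ne') hy
  have hcont : ∀ f : ℝ → ℝ, ContinuousAt f 1 → Tendsto f (𝓝[>] 1) (𝓝 (f 1)) :=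
    fun f hf => hf.tendsto.mono_left nhdsWithin_le_nhds
  have hlim := (((hcont (· ^ d) (by fun_prop)).mul hQ₁).mul_const (y ^ 2)).add
    (hQ₂.mul (hcont (fun a => (y / a ^ 2) ^ 2) (by fun_prop (disch := norm_num)))) |>.sub
    (hcont (fun a => y * (∑ i ∈ Finset.range (d + 2), a ^ i) / ((a + 1) * a ^ 2))
      (by fun_prop (disch := norm_num)))
  convert hlim.congr' ?_ using 2
  · simp only [one_pow, one_div, one_mul, div_one, Finset.sum_const, Finset.card_range,
      nsmul_eq_mul, Nat.cast_add, Nat.cast_ofNat, mul_one]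
    ring
  · filter_upwards [self_mem_nhdsWithin] with a ha using (H_div_sq_eq d ha hy).symm

theorem eventually_H_neg (d : ℕ) {y : ℝ} (hy : 0 < y) (hyc : y < (d : ℝ) / 2 + 1) :
    ∀ᶠ a in 𝓝[>] 1, H d a y < 0 := by
  have hneg : y ^ 2 - ((d : ℝ) / 2 + 1) * y < 0 := by nlinarith
  filter_upwards [(tendsto_H_div_sq d hy.ne').eventually_lt_const hneg] with a ha
  exact neg_of_div_neg_left ha (sq_nonneg _)

theorem eventually_H_pos (d : ℕ) {y : ℝ} (hyc : (d : ℝ) / 2 + 1 < y) :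
    ∀ᶠ a in 𝓝[>] 1, 0 < H d a y := by
  have hy : 0 < y := (by positivity : (0 : ℝ) ≤ d / 2 + 1).trans_lt hyc
  have hpos : 0 < y ^ 2 - ((d : ℝ) / 2 + 1) * y := by nlinarith
  filter_upwards [(tendsto_H_div_sq d hy.ne').eventually_const_lt hpos] with a ha
  exact lt_of_not_ge fun h => ha.not_ge (div_nonpos_of_nonpos_of_nonneg h (sq_nonneg _))

theorem convexOn_exp_mul (c : ℝ) : ConvexOn ℝ univ fun x => exp (c * x) :=
  convexOn_exp.comp_linearMap (LinearMap.mul ℝ ℝ c)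

theorem convexOn_H (d : ℕ) {a : ℝ} (ha : 0 ≤ a) : ConvexOn ℝ univ (H d a) :=
  (((convexOn_exp_mul (1 - a ^ 2)).smul (pow_nonneg ha d)).add
    (convexOn_exp_mul (1 - (a ^ 2)⁻¹))).add_const (-(1 + a ^ d)) |>.congr
    fun y _ => by simp [H, sub_eq_add_neg]

@[simp] theorem H_zero (d : ℕ) (a : ℝ) : H d a 0 = 0 := by simp [H, add_comm]

theorem lt_of_H_neg {d : ℕ} {a p t : ℝ} (ha : 0 ≤ a) (hp : 0 < p) (hHp : H d a p = 0)
    (hHt : H d a t < 0) : t < p :=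
  lt_of_not_ge fun h => hHt.not_ge <| hHp ▸
    (convexOn_H d ha).le_right_of_left_le'' trivial trivial hp h (by simp [hHp])

theorem lt_of_H_pos {d : ℕ} {a p T : ℝ} (ha : 0 ≤ a) (hHp : H d a p = 0) (hT : 0 ≤ T)
    (hHT : 0 < H d a T) : p < T := by
  refine lt_of_not_ge fun h => hHT.not_ge ?_
  have hseg : T ∈ segment ℝ 0 p := (segment_eq_Icc (hT.trans h)).symm ▸ ⟨hT, h⟩
  simpa [hHp] using (convexOn_H d ha).le_on_segment trivial trivial hseg

theorem stmt_13_general (d : ℕ) (X : ℝ → ℝ)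
    (hX : ∀ a : ℝ, 1 < a → 0 < X a ∧
      a ^ d * Real.exp ((1 - a ^ 2) * X a) + Real.exp ((1 - (a ^ 2)⁻¹) * X a)
        - (1 + a ^ d) = 0) :
    Filter.Tendsto X (nhdsWithin 1 (Set.Ioi 1)) (nhds ((d : ℝ) / 2 + 1)) := by
  refine tendsto_order.2 ⟨fun t ht => ?_, fun T hT => ?_⟩
  · rcases le_or_gt t 0 with ht0 | ht0
    · filter_upwards [self_mem_nhdsWithin] with a (ha : 1 < a) using ht0.trans_lt (hX a ha).1
    · filter_upwards [eventually_H_neg d ht0 ht, self_mem_nhdsWithin] with a hHt (ha : 1 < a)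
      exact lt_of_H_neg (by positivity) (hX a ha).1 (hX a ha).2 hHt
  · filter_upwards [eventually_H_pos d hT, self_mem_nhdsWithin] with a hHT (ha : 1 < a)
    exact lt_of_H_pos (by positivity) (hX a ha).2
      ((by positivity : (0 : ℝ) ≤ d / 2 + 1).trans hT.le) hHT

/-- For `d ≥ 2`, if `X a` is the unique positive zero of
`H_a(X) = a^d e^{(1-a²)X} + e^{(1-a⁻²)X} - (1+a^d)` for each `a > 1`, then
`X a → d/2 + 1` as `a → 1⁺`. -/
theorem stmt_13 (d : ℕ) (hd : 2 ≤ d) (X : ℝ → ℝ)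
    (hX : ∀ a : ℝ, 1 < a → 0 < X a ∧
      a ^ d * Real.exp ((1 - a ^ 2) * X a) + Real.exp ((1 - (a ^ 2)⁻¹) * X a)
        - (1 + a ^ d) = 0) :
    Filter.Tendsto X (nhdsWithin 1 (Set.Ioi 1)) (nhds ((d : ℝ) / 2 + 1)) :=
  stmt_13_general d X hX
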